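/- Let n ≥ 1, r₁ > 0, x ∈ ℝⁿ, and let h be a twice continuously differentiable function on an open neighborhood of B_∞(x, r₁) satisfying ‖∇h(y)‖_∞ ≤ L for all y ∈ B_∞(x, r₁). Then the average of the Laplacian of h over B_∞(x, r₁) is at most nL/r₁, i.e. (1/(2r₁)ⁿ) ∫_{B_∞(x,r₁)} Δh(y) dy ≤ nL/r₁. -/

import Mathlib

open MeasureTheory

/-- The closed `ℓ∞`-ball of radius `r` around `x` in `ℝⁿ`. -/
def Binf {n : ℕ} (x : EuclideanSpace ℝ (Fin n)) (r : ℝ) : Set (EuclideanSpace ℝ (Fin n)) :=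
  {z | ∀ i, |z i - x i| ≤ r}

/-- The Laplacian `Δh(z) = ∑ i, ∂²h/∂xᵢ²(z)`. -/
noncomputable def laplacian {n : ℕ} (h : EuclideanSpace ℝ (Fin n) → ℝ)
    (z : EuclideanSpace ℝ (Fin n)) : ℝ :=
  ∑ i, fderiv ℝ (fun w => fderiv ℝ h w (EuclideanSpace.single i 1)) z (EuclideanSpace.single i 1)

/-!
Since `Δh = div ∇h`, the divergence theorem turns `∫ Δh` over the cube `B_∞(x, r₁)` into the
flux of `∇h` through its `2n` faces. The flux through the two faces orthogonal to `eᵢ` involves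
only `∂ᵢh`, which is bounded by `L` in absolute value, and each face has volume `(2r₁)ⁿ⁻¹`.
Hence `∫ Δh ≤ 2nL(2r₁)ⁿ⁻¹`, and dividing by `(2r₁)ⁿ` gives `nL/r₁`.
-/

open Set

theorem integral_divergence_le_of_abs_le {m : ℕ} {a b : Fin (m + 1) → ℝ} (hle : a ≤ b)
    {f : Fin (m + 1) → (Fin (m + 1) → ℝ) → ℝ}
    {f' : Fin (m + 1) → (Fin (m + 1) → ℝ) → (Fin (m + 1) → ℝ) →L[ℝ] ℝ} {L : ℝ}
    (Hc : ∀ i, ContinuousOn (f i) (Icc a b))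
    (Hd : ∀ x ∈ pi univ fun i => Ioo (a i) (b i), ∀ i, HasFDerivAt (f i) (f' i x) x)
    (Hi : IntegrableOn (fun x => ∑ i, f' i x (Pi.single i 1)) (Icc a b))
    (hL : ∀ x ∈ Icc a b, ∀ i, |f i x| ≤ L) :
    ∫ x in Icc a b, ∑ i, f' i x (Pi.single i 1) ≤
      ∑ i : Fin (m + 1), 2 * L * volume.real (Icc (a ∘ i.succAbove) (b ∘ i.succAbove)) := by
  rw [integral_divergence_of_hasFDerivAt_off_countable' a b hle f f' (∅ : Set _) countable_empty
    Hc (by simpa using Hd) Hi]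
  gcongr with i
  have face (c : ℝ) (hc : c ∈ Icc (a i) (b i)) :
      |∫ w in Icc (a ∘ i.succAbove) (b ∘ i.succAbove), f i (i.insertNth c w)| ≤
        L * volume.real (Icc (a ∘ i.succAbove) (b ∘ i.succAbove)) := by
    rw [← Real.norm_eq_abs]
    exact norm_setIntegral_le_of_norm_le_const measure_Icc_lt_top fun w hw =>
      hL _ (Fin.insertNth_mem_Icc.2 ⟨hc, hw⟩) i
  have hb := abs_le.1 (face (b i) ⟨hle i, le_rfl⟩)
  have ha := abs_le.1 (face (a i) ⟨le_rfl, hle i⟩)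
  linarith [hb.2, ha.1]

theorem volume_real_Icc_sub_add {ι : Type*} [Fintype ι] (x : ι → ℝ) {r : ℝ} (hr : 0 ≤ r) :
    volume.real (Icc (fun i => x i - r) (fun i => x i + r)) = (2 * r) ^ Fintype.card ι := by
  rw [measureReal_def, Real.volume_Icc_pi_toReal fun i => by linarith]
  simp [two_mul, add_sub_sub_cancel]

theorem preimage_toLp_Binf {n : ℕ} (x : EuclideanSpace ℝ (Fin n)) (r : ℝ) :
    WithLp.toLp 2 ⁻¹' Binf x r = Icc (fun i => x i - r) (fun i => x i + r) := by
  ext z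
  simp only [Binf, mem_preimage, mem_ofPred_eq, mem_Icc, Pi.le_def, abs_sub_le_iff,
    ← forall_and]
  exact forall_congr' fun i => by constructor <;> intro h <;> constructor <;> linarith [h.1, h.2]

theorem setIntegral_Binf_eq_setIntegral_Icc {n : ℕ} (x : EuclideanSpace ℝ (Fin n)) (r : ℝ)
    (g : EuclideanSpace ℝ (Fin n) → ℝ) :
    ∫ y in Binf x r, g y =
      ∫ z in Icc (fun i => x i - r) (fun i => x i + r), g (WithLp.toLp 2 z) := by
  rw [← preimage_toLp_Binf, (PiLp.volume_preserving_toLp (Fin n)).setIntegral_preimage_emb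
    (MeasurableEquiv.toLp 2 _).measurableEmbedding]

theorem fderiv_apply_single_eq_gradient {n : ℕ} (h : EuclideanSpace ℝ (Fin n) → ℝ)
    (y : EuclideanSpace ℝ (Fin n)) (i : Fin n) :
    fderiv ℝ h y (EuclideanSpace.single i 1) = gradient h y i := by
  rw [← toDual_gradient, InnerProductSpace.toDual_apply_apply, EuclideanSpace.inner_single_right]
  simp

theorem laplacian_toLp {n : ℕ} (h : EuclideanSpace ℝ (Fin n) → ℝ) (z : Fin n → ℝ) :
    laplacian h (WithLp.toLp 2 z) = ∑ i, fderiv ℝ (fun z => fderiv ℝ h (WithLp.toLp 2 z)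
      (EuclideanSpace.single i 1)) z (Pi.single i 1) := by
  refine Finset.sum_congr rfl fun i _ => ?_
  rw [show (fun z : Fin n → ℝ => fderiv ℝ h (WithLp.toLp 2 z) (EuclideanSpace.single i 1)) =
    (fun w => fderiv ℝ h w (EuclideanSpace.single i 1)) ∘ (EuclideanSpace.equiv (Fin n) ℝ).symm
    from rfl, ContinuousLinearEquiv.comp_right_fderiv]
  simp

theorem ContDiffOn.fderiv_apply_of_isOpen {E F : Type*} [NormedAddCommGroup E]
    [NormedSpace ℝ E] [NormedAddCommGroup F] [NormedSpace ℝ F] {h : E → F} {U : Set E}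
    (hh : ContDiffOn ℝ 2 h U) (hU : IsOpen U) (v : E) :
    ContDiffOn ℝ 1 (fun w => fderiv ℝ h w v) U :=
  (hh.fderiv_of_isOpen hU (by norm_num)).clm_apply contDiffOn_const

theorem continuousOn_laplacian {n : ℕ} {h : EuclideanSpace ℝ (Fin n) → ℝ}
    {U : Set (EuclideanSpace ℝ (Fin n))} (hh : ContDiffOn ℝ 2 h U) (hU : IsOpen U) :
    ContinuousOn (laplacian h) U :=
  continuousOn_finsetSum _ fun _ _ =>
    ((hh.fderiv_apply_of_isOpen hU _).continuousOn_fderiv_of_isOpen hU le_rfl).clm_apply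
      continuousOn_const

theorem integral_laplacian_Binf_le {m : ℕ} {r L : ℝ} (hr : 0 ≤ r)
    {x : EuclideanSpace ℝ (Fin (m + 1))} {h : EuclideanSpace ℝ (Fin (m + 1)) → ℝ}
    {U : Set (EuclideanSpace ℝ (Fin (m + 1)))} (hU : IsOpen U) (hBU : Binf x r ⊆ U)
    (hh : ContDiffOn ℝ 2 h U) (hL : ∀ y ∈ Binf x r, ∀ i, |gradient h y i| ≤ L) :
    ∫ y in Binf x r, laplacian h y ≤ (m + 1) * (2 * L * (2 * r) ^ m) := by
  set a : Fin (m + 1) → ℝ := fun i => x i - r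
  set b : Fin (m + 1) → ℝ := fun i => x i + r
  let f : Fin (m + 1) → (Fin (m + 1) → ℝ) → ℝ := fun i z =>
    fderiv ℝ h (WithLp.toLp 2 z) (EuclideanSpace.single i 1)
  have hBinf : ∀ z ∈ Icc a b, WithLp.toLp 2 z ∈ Binf x r := fun z hz => by
    rwa [← mem_preimage, preimage_toLp_Binf]
  have hf : ∀ i, ContDiffOn ℝ 1 (f i) (WithLp.toLp 2 ⁻¹' U) := fun i =>
    (hh.fderiv_apply_of_isOpen hU _).comp PiLp.contDiff_toLp.contDiffOn (mapsTo_preimage _ _)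
  have hUopen : IsOpen (WithLp.toLp 2 ⁻¹' U : Set (Fin (m + 1) → ℝ)) :=
    hU.preimage (PiLp.continuous_toLp 2 _)
  have hIccU : Icc a b ⊆ WithLp.toLp 2 ⁻¹' U := fun z hz => hBU (hBinf z hz)
  have Hi : IntegrableOn (fun z => ∑ i, fderiv ℝ (f i) z (Pi.single i 1)) (Icc a b) := by
    refine (ContinuousOn.integrableOn_compact isCompact_Icc ?_).congr_fun
      (fun z _ => laplacian_toLp h z) measurableSet_Icc
    exact (continuousOn_laplacian hh hU).comp (PiLp.continuous_toLp 2 _).continuousOn hIccU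
  calc ∫ y in Binf x r, laplacian h y
      = ∫ z in Icc a b, ∑ i, fderiv ℝ (f i) z (Pi.single i 1) := by
        rw [setIntegral_Binf_eq_setIntegral_Icc]
        exact setIntegral_congr_fun measurableSet_Icc fun z _ => laplacian_toLp h z
    _ ≤ ∑ i : Fin (m + 1), 2 * L * volume.real (Icc (a ∘ i.succAbove) (b ∘ i.succAbove)) := by
        refine integral_divergence_le_of_abs_le (fun i => by simp only [a, b]; linarith)
          (fun i => (hf i).continuousOn.mono hIccU) (fun z hz i => ?_) Hi
          (fun z hz i => by
            simpa only [f, fderiv_apply_single_eq_gradient] using hL _ (hBinf z hz) i)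
        have hzU : z ∈ WithLp.toLp 2 ⁻¹' U :=
          hIccU (pi_univ_Icc a b ▸ pi_mono (fun _ _ => Ioo_subset_Icc_self) hz)
        exact ((hf i).differentiableOn one_ne_zero z hzU
          |>.differentiableAt (hUopen.mem_nhds hzU)).hasFDerivAt
    _ = (m + 1) * (2 * L * (2 * r) ^ m) := by
        simp [Function.comp_def, a, b, volume_real_Icc_sub_add _ hr]

theorem stmt2_general {n : ℕ} (r₁ L : ℝ) (hr₁ : 0 < r₁)
    (x : EuclideanSpace ℝ (Fin n)) (h : EuclideanSpace ℝ (Fin n) → ℝ)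
    (U : Set (EuclideanSpace ℝ (Fin n))) (hU : IsOpen U) (hBU : Binf x r₁ ⊆ U)
    (hh : ContDiffOn ℝ 2 h U)
    (hL : ∀ y ∈ Binf x r₁, ∀ i, |gradient h y i| ≤ L) :
    ((2 * r₁) ^ n)⁻¹ * ∫ y in Binf x r₁, laplacian h y ≤ n * L / r₁ := by
  cases n with
  | zero => simp [laplacian]
  | succ m =>
    calc ((2 * r₁) ^ (m + 1))⁻¹ * ∫ y in Binf x r₁, laplacian h y
        ≤ ((2 * r₁) ^ (m + 1))⁻¹ * ((m + 1) * (2 * L * (2 * r₁) ^ m)) := by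
          gcongr
          exact integral_laplacian_Binf_le hr₁.le hU hBU hh hL
      _ = (m + 1 : ℕ) * L / r₁ := by
          field_simp
          push_cast
          ring

/-- If `h` is twice continuously differentiable on an open neighborhood of
`B_∞(x, r₁)` and `‖∇h(y)‖_∞ ≤ L` on `B_∞(x, r₁)`, then the average of the Laplacian of `h`
over `B_∞(x, r₁)` is at most `n L / r₁`. -/
theorem stmt2 {n : ℕ} (hn : 1 ≤ n) (r₁ L : ℝ) (hr₁ : 0 < r₁)
    (x : EuclideanSpace ℝ (Fin n)) (h : EuclideanSpace ℝ (Fin n) → ℝ)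
    (U : Set (EuclideanSpace ℝ (Fin n))) (hU : IsOpen U) (hBU : Binf x r₁ ⊆ U)
    (hh : ContDiffOn ℝ 2 h U)
    (hL : ∀ y ∈ Binf x r₁, ∀ i, |gradient h y i| ≤ L) :
    ((2 * r₁) ^ n)⁻¹ * ∫ y in Binf x r₁, laplacian h y ≤ n * L / r₁ :=
  stmt2_general r₁ L hr₁ x h U hU hBU hh hL
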